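/- Let n, m be natural numbers and let F : (Fin n → ℝ) → (Fin m → ℝ) be a differentiable map. Let S ⊆ (Fin n → ℝ) be a convex set, and let J_lo, J_hi be m × n real matrices such that for every x ∈ S and all indices i, j, the (i,j) entry of the Jacobian matrix of F at x (i.e., the j-th partial derivative of the i-th component of F at x) lies in the interval [J_lo i j, J_hi i j]. Then for all x, y ∈ S there exists an m × n real matrix A with J_lo i j ≤ A i j ≤ J_hi i j for all i, j, such that F y − F x = A *ᵥ (y − x) (matrix–vector multiplication). -/

import Mathlib

/-! Apply the scalar mean value theorem to each component `F · i` along the segment `[x, y]`: it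
yields a point `ξ i ∈ S`, depending on `i`, with `F y i - F x i = DF(ξ i) (y - x) i`. Row `i` of `A`
is then row `i` of the Jacobian at `ξ i`, whose entries lie in the given intervals. -/

theorem Convex.exists_mem_segment_apply_sub_apply_eq_fderiv_apply
    {E ι : Type*} [NormedAddCommGroup E] [NormedSpace ℝ E] [Fintype ι]
    {F : E → ι → ℝ} {S : Set E} (hS : Convex ℝ S) (hF : ∀ z ∈ S, DifferentiableAt ℝ F z)
    {x y : E} (hx : x ∈ S) (hy : y ∈ S) (i : ι) :
    ∃ ξ ∈ segment ℝ x y, F y i - F x i = fderiv ℝ F ξ (y - x) i :=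
  domain_mvt (f := fun z => F z i)
    (f' := fun z => (ContinuousLinearMap.proj i).comp (fderiv ℝ F z))
    (fun z hz => (hasFDerivAt_pi'.1 (hF z hz).hasFDerivAt i).hasFDerivWithinAt)
    hS hx hy

theorem ContinuousLinearMap.apply_apply_eq_sum_apply_single_mul
    {R ι κ : Type*} [CommSemiring R] [TopologicalSpace R] [Fintype ι] [DecidableEq ι]
    (L : (ι → R) →L[R] κ → R) (v : ι → R) (k : κ) :
    L v k = ∑ j, L (Pi.single j 1) k * v j := by
  conv_lhs => rw [← Finset.univ_sum_single v]
  simp only [map_sum, Finset.sum_apply]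
  refine Finset.sum_congr rfl fun j _ => ?_
  have hsingle : Pi.single j (v j) = v j • (Pi.single j 1 : ι → R) := by
    rw [← Pi.single_smul', smul_eq_mul, mul_one]
  rw [hsingle, L.map_smul, Pi.smul_apply, smul_eq_mul, mul_comm]

theorem mean_value_jacobian_enclosure (n m : ℕ)
    (F : (Fin n → ℝ) → (Fin m → ℝ)) (hF : Differentiable ℝ F)
    (S : Set (Fin n → ℝ)) (hS : Convex ℝ S)
    (Jlo Jhi : Matrix (Fin m) (Fin n) ℝ)
    (hJ : ∀ x ∈ S, ∀ (i : Fin m) (j : Fin n),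
      fderiv ℝ F x (Pi.single j 1) i ∈ Set.Icc (Jlo i j) (Jhi i j)) :
    ∀ x ∈ S, ∀ y ∈ S, ∃ A : Matrix (Fin m) (Fin n) ℝ,
      (∀ (i : Fin m) (j : Fin n), Jlo i j ≤ A i j ∧ A i j ≤ Jhi i j) ∧
      F y - F x = A.mulVec (y - x) := by
  intro x hx y hy
  choose ξ hξ hmvt using fun i =>
    hS.exists_mem_segment_apply_sub_apply_eq_fderiv_apply (fun z _ => hF z) hx hy i
  have hξS : ∀ i, ξ i ∈ S := fun i => hS.segment_subset hx hy (hξ i)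
  refine ⟨fun i j => fderiv ℝ F (ξ i) (Pi.single j 1) i, fun i j => hJ _ (hξS i) i j, ?_⟩
  funext i
  rw [Pi.sub_apply, hmvt i, ContinuousLinearMap.apply_apply_eq_sum_apply_single_mul]
  rfl
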